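/- Let Q_1, ..., Q_n be positive semidefinite n×n matrices with decompositions Q_i = T_i T_i*. If u_1, ..., u_n are independent standard Gaussian vectors in R^n, then the expectation of α = (det[T_1 u_1, ..., T_n u_n])² equals the mixed discriminant D(Q_1, ..., Q_n). -/

import Mathlib

/-- The mixed discriminant `D(Q₁,…,Qₙ) = ∂ⁿ/∂t₁⋯∂tₙ det(t₁Q₁ + ⋯ + tₙQₙ)`. -/
noncomputable def mixedDiscriminant {n : ℕ} (Q : Fin n → Matrix (Fin n) (Fin n) ℝ) : ℝ :=
  MvPolynomial.eval (fun _ => (0 : ℝ))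
    ((List.finRange n).foldl (fun p i => MvPolynomial.pderiv i p)
      (Matrix.det ((∑ i : Fin n, (MvPolynomial.X i : MvPolynomial (Fin n) ℝ) • (Q i).map (MvPolynomial.C : ℝ →+* MvPolynomial (Fin n) ℝ) :
        Matrix (Fin n) (Fin n) (MvPolynomial (Fin n) ℝ)))))

open MeasureTheory ProbabilityTheory Matrix

section Auxiliary
open Real
open scoped ENNReal NNReal


lemma pdf_eq (x : ℝ) : gaussianPDFReal 0 1 x = (√(2*π))⁻¹ * rexp (-(2⁻¹) * x^2) := by
  simp only [gaussianPDFReal, NNReal.coe_one, mul_one, sub_zero]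
  ring_nf

lemma gaussEq : gaussianReal 0 1 =
    volume.withDensity (fun x => ENNReal.ofReal (gaussianPDFReal 0 1 x)) := by
  rw [gaussianReal_of_var_ne_zero 0 one_ne_zero]; rfl

lemma integral_gauss (f : ℝ → ℝ) :
    ∫ x, f x ∂gaussianReal 0 1 = ∫ x, gaussianPDFReal 0 1 x * f x := by
  rw [gaussEq]
  have : (fun x => ENNReal.ofReal (gaussianPDFReal 0 1 x))
      = fun x => ((fun x => (gaussianPDFReal 0 1 x).toNNReal) x : ℝ≥0∞) := rfl
  rw [this, integral_withDensity_eq_integral_smul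
    ((measurable_gaussianPDFReal 0 1).real_toNNReal) f]
  congr 1; ext x
  simp [NNReal.smul_def, Real.coe_toNNReal _ (gaussianPDFReal_nonneg 0 1 x)]

lemma integrable_gauss_iff (f : ℝ → ℝ) :
    Integrable f (gaussianReal 0 1) ↔
      Integrable (fun x => f x * gaussianPDFReal 0 1 x) volume := by
  rw [gaussEq, integrable_withDensity_iff (measurable_gaussianPDFReal 0 1).ennreal_ofReal
    (Filter.Eventually.of_forall fun x => ENNReal.ofReal_lt_top)]
  refine integrable_congr (Filter.Eventually.of_forall fun x => ?_)
  simp only [ENNReal.toReal_ofReal (gaussianPDFReal_nonneg 0 1 x)]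
lemma integrable_sq_exp : Integrable (fun x : ℝ => x^2 * rexp (-(2⁻¹) * x^2)) := by
  have h := integrable_rpow_mul_exp_neg_mul_sq (b := 2⁻¹) (by norm_num) (s := 2) (by norm_num)
  refine h.congr (Filter.Eventually.of_forall fun x => ?_)
  have hx : x ^ (2:ℝ) = x ^ 2 := by
    rw [← Real.rpow_natCast x 2]; norm_num
  simp only [hx]

lemma integrable_gauss_one : Integrable (fun _ : ℝ => (1:ℝ)) (gaussianReal 0 1) :=
  integrable_const 1

lemma integrable_gauss_id : Integrable (fun x : ℝ => x) (gaussianReal 0 1) := by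
  rw [integrable_gauss_iff]
  refine ((integrable_mul_exp_neg_mul_sq (b := 2⁻¹) (by norm_num)).const_mul
    ((√(2*π))⁻¹)).congr (Filter.Eventually.of_forall fun x => ?_)
  simp only [pdf_eq]; ring

lemma integrable_gauss_sq : Integrable (fun x : ℝ => x * x) (gaussianReal 0 1) := by
  rw [integrable_gauss_iff]
  refine (integrable_sq_exp.const_mul ((√(2*π))⁻¹)).congr
    (Filter.Eventually.of_forall fun x => ?_)
  simp only [pdf_eq]; ring

lemma gauss_mean : ∫ x, x ∂gaussianReal 0 1 = 0 := by
  rw [integral_gauss]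
  have h := MeasureTheory.integral_neg_eq_self (μ := (volume : Measure ℝ)) (fun x : ℝ => gaussianPDFReal 0 1 x * x)
  have h2 : ∀ x : ℝ, gaussianPDFReal 0 1 (-x) * (-x) = -(gaussianPDFReal 0 1 x * x) := by
    intro x; simp only [pdf_eq, neg_sq]; ring
  simp only [h2, MeasureTheory.integral_neg] at h
  linarith

lemma gauss_sq_exp_integral : ∫ x : ℝ, x^2 * rexp (-(2⁻¹) * x^2) = √(2*π) := by
  have hderiv : ∀ x : ℝ, HasDerivAt (fun y : ℝ => y * rexp (-(2⁻¹) * y^2))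
      (rexp (-(2⁻¹) * x^2) - x^2 * rexp (-(2⁻¹) * x^2)) x := by
    intro x
    have h1 : HasDerivAt (fun y : ℝ => -(2⁻¹) * y^2) (-(2⁻¹) * (2*x)) x := by
      simpa using ((hasDerivAt_pow 2 x)).const_mul (-(2⁻¹):ℝ)
    have h3 : HasDerivAt (fun y : ℝ => id y * rexp (-(2⁻¹) * y^2)) _ x := (hasDerivAt_id x).mul h1.exp
    simp only [id_eq, one_mul] at h3
    convert h3 using 1
    ring
  have hf' : Integrable (fun x : ℝ => rexp (-(2⁻¹) * x^2) - x^2 * rexp (-(2⁻¹) * x^2)) :=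
    (integrable_exp_neg_mul_sq (by norm_num : (0:ℝ) < 2⁻¹)).sub integrable_sq_exp
  have hf : Integrable (fun x : ℝ => x * rexp (-(2⁻¹) * x^2)) :=
    integrable_mul_exp_neg_mul_sq (by norm_num)
  have h0 := MeasureTheory.integral_eq_zero_of_hasDerivAt_of_integrable hderiv hf' hf
  rw [MeasureTheory.integral_sub (integrable_exp_neg_mul_sq (by norm_num : (0:ℝ) < 2⁻¹))
    integrable_sq_exp] at h0
  have hg : ∫ x : ℝ, rexp (-(2⁻¹) * x^2) = √(2*π) := by
    have h := integral_gaussian 2⁻¹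
    rw [show π/2⁻¹ = 2*π by ring] at h
    exact h
  linarith

lemma gauss_second : ∫ x, x * x ∂gaussianReal 0 1 = 1 := by
  rw [integral_gauss]
  have h1 : ∀ x : ℝ, gaussianPDFReal 0 1 x * (x * x) = (√(2*π))⁻¹ * (x^2 * rexp (-(2⁻¹) * x^2)) := by
    intro x; rw [pdf_eq]; ring
  simp_rw [h1]
  rw [MeasureTheory.integral_const_mul, gauss_sq_exp_integral, inv_mul_cancel₀]
  positivity
lemma my_integral_pi_prod {ι : Type*} [Fintype ι] {E : ι → Type*} [∀ i, MeasurableSpace (E i)]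
    (μ : ∀ i, Measure (E i)) [∀ i, SigmaFinite (μ i)] (f : ∀ i, E i → ℝ) :
    ∫ x, ∏ i, f i (x i) ∂Measure.pi μ = ∏ i, ∫ x, f i x ∂(μ i) := by
  letI : ∀ i, MeasureSpace (E i) := fun i => ⟨μ i⟩
  exact MeasureTheory.integral_fintype_prod_eq_prod f

lemma my_integrable_pi_prod {ι : Type*} [Fintype ι] {E : ι → Type*} [∀ i, MeasurableSpace (E i)]
    (μ : ∀ i, Measure (E i)) [∀ i, SigmaFinite (μ i)] (f : ∀ i, E i → ℝ)
    (hf : ∀ i, Integrable (f i) (μ i)) :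
    Integrable (fun x => ∏ i, f i (x i)) (Measure.pi μ) := by
  letI : ∀ i, MeasureSpace (E i) := fun i => ⟨μ i⟩
  exact MeasureTheory.Integrable.fintype_prod_dep hf
section Coord
open Matrix
variable {n : ℕ}

noncomputable def gpi (n : ℕ) : Measure (Fin n → ℝ) :=
  Measure.pi fun _ : Fin n => gaussianReal 0 1

noncomputable def g2 (k l m : Fin n) : ℝ → ℝ :=
  fun x => (if m = k then x else 1) * (if m = l then x else 1)

lemma g2_prod (k l : Fin n) (v : Fin n → ℝ) : v k * v l = ∏ m, g2 k l m (v m) := by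
  unfold g2
  rw [Finset.prod_mul_distrib, Finset.prod_ite_eq' Finset.univ k (fun m => v m),
    Finset.prod_ite_eq' Finset.univ l (fun m => v m)]
  simp

lemma integrable_g2 (k l m : Fin n) : Integrable (g2 k l m) (gaussianReal 0 1) := by
  unfold g2
  split_ifs with h1 h2 h3
  · exact integrable_gauss_sq
  · simpa using integrable_gauss_id
  · simpa using integrable_gauss_id
  · simpa using integrable_gauss_one

lemma integral_g2 (k l m : Fin n) :
    ∫ x, g2 k l m x ∂gaussianReal 0 1 =
      if ((m = k) ↔ (m = l)) then 1 else 0 := by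
  unfold g2
  by_cases h1 : m = k <;> by_cases h2 : m = l
  · subst h1; subst h2; simp [gauss_second]
  · subst h1; simp [h2, gauss_mean]
  · subst h2; simp [h1, gauss_mean]
  · simp [h1, h2]

lemma integrable_coord_mul (k l : Fin n) :
    Integrable (fun v : Fin n → ℝ => v k * v l) (gpi n) := by
  simp_rw [g2_prod k l]
  exact my_integrable_pi_prod _ _ (fun m => integrable_g2 k l m)

lemma integral_coord_mul (k l : Fin n) :
    ∫ v, v k * v l ∂gpi n = if k = l then 1 else 0 := by
  simp_rw [g2_prod k l]
  unfold gpi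
  rw [my_integral_pi_prod]
  by_cases h : k = l
  · subst h
    rw [if_pos rfl]
    refine Finset.prod_eq_one fun m _ => ?_
    rw [integral_g2]
    simp
  · rw [if_neg h]
    refine Finset.prod_eq_zero (Finset.mem_univ k) ?_
    rw [integral_g2]
    simp [h]

lemma mulVec_mul_eq_sum (T : Matrix (Fin n) (Fin n) ℝ) (a b : Fin n) (v : Fin n → ℝ) :
    T.mulVec v a * T.mulVec v b = ∑ k, ∑ l, (T a k * T b l) * (v k * v l) := by
  simp only [Matrix.mulVec, dotProduct]
  rw [Finset.sum_mul_sum]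
  refine Finset.sum_congr rfl fun k _ => Finset.sum_congr rfl fun l _ => by ring

lemma integrable_bilinear (T : Matrix (Fin n) (Fin n) ℝ) (a b : Fin n) :
    Integrable (fun v : Fin n → ℝ => T.mulVec v a * T.mulVec v b) (gpi n) := by
  simp_rw [mulVec_mul_eq_sum]
  exact integrable_finset_sum _ fun k _ => integrable_finset_sum _ fun l _ =>
    (integrable_coord_mul k l).const_mul _

lemma integral_bilinear (T : Matrix (Fin n) (Fin n) ℝ) (a b : Fin n) :
    ∫ v, T.mulVec v a * T.mulVec v b ∂gpi n = (T * Tᵀ) a b := by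
  simp_rw [mulVec_mul_eq_sum]
  rw [MeasureTheory.integral_finset_sum _ fun k _ =>
    integrable_finset_sum _ fun l _ => (integrable_coord_mul k l).const_mul _]
  have h : ∀ k : Fin n, ∫ v, (∑ l, (T a k * T b l) * (v k * v l)) ∂gpi n
      = ∑ l, (T a k * T b l) * (if k = l then 1 else 0) := by
    intro k
    rw [MeasureTheory.integral_finset_sum _ fun l _ => (integrable_coord_mul k l).const_mul _]
    refine Finset.sum_congr rfl fun l _ => ?_
    rw [MeasureTheory.integral_const_mul, integral_coord_mul]
  simp_rw [h]
  simp [Matrix.mul_apply, Matrix.transpose_apply, Finset.sum_ite_eq, mul_ite]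

end Coord
section PartA
open Matrix Equiv
variable {n : ℕ}

instance : IsProbabilityMeasure (gpi n) := by
  unfold gpi; infer_instance

instance : SigmaFinite (gpi n) := by
  unfold gpi; infer_instance

lemma det_sq_expand (T : Fin n → Matrix (Fin n) (Fin n) ℝ) (u : Fin n → (Fin n → ℝ)) :
    (Matrix.det (Matrix.of fun i k : Fin n => (T k).mulVec (u k) i)) ^ 2
      = ∑ σ : Perm (Fin n), ∑ τ : Perm (Fin n),
          (((Perm.sign σ : ℤ) : ℝ) * ((Perm.sign τ : ℤ) : ℝ)) *
            ∏ i, ((T i).mulVec (u i) (σ i) * (T i).mulVec (u i) (τ i)) := by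
  rw [Matrix.det_apply', sq, Finset.sum_mul_sum]
  refine Finset.sum_congr rfl fun σ _ => Finset.sum_congr rfl fun τ _ => ?_
  rw [Finset.prod_mul_distrib]
  simp only [Matrix.of_apply]
  ring

lemma partA (T : Fin n → Matrix (Fin n) (Fin n) ℝ) :
    ∫ u : Fin n → (Fin n → ℝ),
        (Matrix.det (Matrix.of fun i k : Fin n => (T k).mulVec (u k) i)) ^ 2
        ∂(Measure.pi fun _ : Fin n => gpi n) =
      ∑ σ : Perm (Fin n), ∑ τ : Perm (Fin n),
        (((Perm.sign σ : ℤ) : ℝ) * ((Perm.sign τ : ℤ) : ℝ)) *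
          ∏ i, (T i * (T i)ᵀ) (σ i) (τ i) := by
  simp_rw [det_sq_expand T]
  have hint : ∀ σ τ : Perm (Fin n),
      Integrable (fun u : Fin n → (Fin n → ℝ) =>
        ∏ i, ((T i).mulVec (u i) (σ i) * (T i).mulVec (u i) (τ i)))
        (Measure.pi fun _ : Fin n => gpi n) := by
    intro σ τ
    exact my_integrable_pi_prod _
      (fun i => fun w => (T i).mulVec w (σ i) * (T i).mulVec w (τ i))
      (fun i => integrable_bilinear (T i) (σ i) (τ i))
  rw [MeasureTheory.integral_finset_sum _ fun σ _ =>
    integrable_finset_sum _ fun τ _ => (hint σ τ).const_mul _]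
  refine Finset.sum_congr rfl fun σ _ => ?_
  rw [MeasureTheory.integral_finset_sum _ fun τ _ => (hint σ τ).const_mul _]
  refine Finset.sum_congr rfl fun τ _ => ?_
  rw [MeasureTheory.integral_const_mul]
  congr 1
  rw [my_integral_pi_prod (fun _ => gpi n)
    (fun i => fun w => (T i).mulVec w (σ i) * (T i).mulVec w (τ i))]
  exact Finset.prod_congr rfl fun i _ => integral_bilinear (T i) (σ i) (τ i)

end PartA
section PartB
open MvPolynomial Equiv
variable {n : ℕ}

lemma coeff_pderiv_zero (i : Fin n) (m : Fin n →₀ ℕ) (hm : m i = 0)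
    (p : MvPolynomial (Fin n) ℝ) :
    MvPolynomial.coeff m (MvPolynomial.pderiv i p)
      = MvPolynomial.coeff (m + Finsupp.single i 1) p := by
  induction p using MvPolynomial.induction_on' with
  | monomial s a =>
    rw [MvPolynomial.pderiv_monomial, MvPolynomial.coeff_monomial,
      MvPolynomial.coeff_monomial]
    by_cases hs : s i = 0
    · have h1 : s - Finsupp.single i 1 = s := by
        ext j
        by_cases hj : j = i
        · subst hj; simp [Finsupp.tsub_apply, hs]
        · simp [Finsupp.tsub_apply, Finsupp.single_apply, Ne.symm hj]
      have h2 : s ≠ m + Finsupp.single i 1 := by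
        intro h
        apply absurd hs
        rw [h]; simp [hm]
      rw [h1, if_neg h2]
      split_ifs with h3
      · rw [hs]; norm_num
      · rfl
    · have hkey : (s - Finsupp.single i 1) + Finsupp.single i 1 = s := by
        ext j
        by_cases hj : j = i
        · subst hj
          simp [Finsupp.single_apply]
          omega
        · simp [Finsupp.tsub_apply, Finsupp.single_apply, Ne.symm hj]
      by_cases h3 : s - Finsupp.single i 1 = m
      · have h4 : s = m + Finsupp.single i 1 := by rw [← h3]; exact hkey.symm
        rw [if_pos h3, if_pos h4]
        have h5 : s i = 1 := by rw [h4]; simp [hm]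
        rw [h5]; norm_num
      · have h4 : s ≠ m + Finsupp.single i 1 := by
          intro h
          apply h3
          rw [h, add_tsub_cancel_right]
        rw [if_neg h3, if_neg h4]
  | add p q hp hq => simp [hp, hq]

lemma list_sum_single_apply (a : Fin n) :
    ∀ (t : List (Fin n)), a ∉ t → ((t.map fun i => Finsupp.single i (1:ℕ)).sum) a = 0 := by
  intro t
  induction t with
  | nil => simp
  | cons b s ihs =>
    intro h
    simp only [List.mem_cons, not_or] at h
    simp only [List.map_cons, List.sum_cons, Finsupp.add_apply]
    rw [Finsupp.single_apply, if_neg (fun hh => h.1 hh.symm), ihs h.2, add_zero]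

lemma eval_zero_foldl_pderiv (l : List (Fin n)) (hl : l.Nodup) (P : MvPolynomial (Fin n) ℝ) :
    MvPolynomial.eval (fun _ => (0:ℝ)) (l.foldl (fun p i => MvPolynomial.pderiv i p) P)
      = MvPolynomial.coeff ((l.map fun i => Finsupp.single i 1).sum) P := by
  induction l generalizing P with
  | nil =>
    simp only [List.foldl_nil, List.map_nil, List.sum_nil]
    rw [MvPolynomial.eval_zero', MvPolynomial.constantCoeff_eq]
  | cons a t ih =>
    simp only [List.foldl_cons, List.map_cons, List.sum_cons]
    rw [ih (List.Nodup.of_cons hl) (MvPolynomial.pderiv a P),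
      coeff_pderiv_zero a _ (list_sum_single_apply a t (List.Nodup.notMem hl)), add_comm]

lemma prod_X_eq_monomial (f : Fin n → Fin n) :
    (∏ b, (X (f b) : MvPolynomial (Fin n) ℝ))
      = MvPolynomial.monomial (∑ b, Finsupp.single (f b) 1) 1 := by
  classical
  induction (Finset.univ : Finset (Fin n)) using Finset.induction with
  | empty => simp [MvPolynomial.monomial_zero']
  | insert _ _ h ih =>
      rw [Finset.prod_insert h, Finset.sum_insert h, ih, MvPolynomial.X,
        MvPolynomial.monomial_mul, one_mul]

lemma sum_single_eq_iff (f : Fin n → Fin n) :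
    (∑ b, Finsupp.single (f b) (1:ℕ)) = (∑ i, Finsupp.single i 1) ↔ Function.Bijective f := by
  constructor
  · intro h
    rw [← Finite.surjective_iff_bijective]
    intro i
    have h1 := congrArg (fun m : Fin n →₀ ℕ => m i) h
    simp only [Finsupp.finset_sum_apply] at h1
    have h2 : (∑ i' : Fin n, (Finsupp.single i' (1:ℕ)) i) = 1 := by
      simp [Finsupp.single_apply]
    rw [h2] at h1
    obtain ⟨b, _, hb⟩ := Finset.exists_ne_zero_of_sum_ne_zero (by rw [h1]; norm_num)
    refine ⟨b, ?_⟩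
    rw [Finsupp.single_apply] at hb
    by_contra hc
    exact hb (if_neg hc)
  · intro h
    exact Fintype.sum_bijective f h _ _ (fun b => rfl)

lemma sum_perm_extract (w : (Fin n → Fin n) → ℝ) :
    (∑ f : Fin n → Fin n,
      if (∑ b, Finsupp.single (f b) (1:ℕ)) = (∑ i, Finsupp.single i 1) then w f else 0)
      = ∑ τ : Perm (Fin n), w τ := by
  classical
  rw [← Finset.sum_filter]
  refine Finset.sum_bij' (fun f hf => Equiv.ofBijective f ((sum_single_eq_iff f).mp
      (by simpa using hf)))
    (fun σ _ => (σ : Fin n → Fin n)) ?_ ?_ ?_ ?_ ?_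
  · intro f hf; exact Finset.mem_univ _
  · intro σ _
    simp only [Finset.mem_filter, Finset.mem_univ, true_and]
    exact (sum_single_eq_iff σ).mpr σ.bijective
  · intro f hf; rfl
  · intro σ _; exact Equiv.ext fun x => rfl
  · intro f hf; rfl

lemma coeff_allOnes_prod (c : Fin n → Fin n → ℝ) :
    MvPolynomial.coeff (∑ i, Finsupp.single i 1)
        (∏ b, ∑ i, (X i : MvPolynomial (Fin n) ℝ) * C (c i b))
      = ∑ τ : Perm (Fin n), ∏ b, c (τ b) b := by
  classical
  rw [Finset.prod_univ_sum]
  rw [Fintype.piFinset_univ]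
  have hterm : ∀ f : Fin n → Fin n,
      (∏ b, (X (f b) : MvPolynomial (Fin n) ℝ) * C (c (f b) b))
        = MvPolynomial.monomial (∑ b, Finsupp.single (f b) 1) (∏ b, c (f b) b) := by
    intro f
    rw [Finset.prod_mul_distrib, prod_X_eq_monomial, ← map_prod (C : ℝ →+* MvPolynomial (Fin n) ℝ),
      ← MvPolynomial.monomial_zero', MvPolynomial.monomial_mul, add_zero, one_mul]
  simp_rw [hterm]
  rw [MvPolynomial.coeff_sum]
  simp_rw [MvPolynomial.coeff_monomial]
  exact sum_perm_extract (fun f => ∏ b, c (f b) b)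

end PartB

section PartB2
open MvPolynomial Equiv
variable {n : ℕ}

lemma mixedDiscriminant_eq (Q : Fin n → Matrix (Fin n) (Fin n) ℝ) :
    mixedDiscriminant Q = ∑ σ : Perm (Fin n), ((Perm.sign σ : ℤ) : ℝ) *
      ∑ τ : Perm (Fin n), ∏ b, Q (τ b) (σ b) b := by
  unfold mixedDiscriminant
  rw [eval_zero_foldl_pderiv _ (List.nodup_finRange n),
    ← Fin.sum_univ_def (fun i => Finsupp.single i (1:ℕ))]
  have hM : ∀ a b : Fin n,
      (∑ i : Fin n, (X i : MvPolynomial (Fin n) ℝ) • (Q i).map C) a b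
        = ∑ i, (X i : MvPolynomial (Fin n) ℝ) * C (Q i a b) := by
    intro a b
    simp [Matrix.sum_apply, Matrix.map_apply, smul_eq_mul]
  rw [Matrix.det_apply', MvPolynomial.coeff_sum]
  refine Finset.sum_congr rfl fun σ _ => ?_
  have hcast : ((Perm.sign σ : ℤ) : MvPolynomial (Fin n) ℝ)
      = C (((Perm.sign σ : ℤ) : ℝ)) :=
    (map_intCast (C : ℝ →+* MvPolynomial (Fin n) ℝ) _).symm
  rw [hcast, MvPolynomial.coeff_C_mul]
  congr 1
  simp_rw [hM]
  exact coeff_allOnes_prod (fun i b => Q i (σ b) b)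

lemma unit_sq (u : ℤˣ) : ((u : ℤ) : ℝ) * ((u : ℤ) : ℝ) = 1 := by
  rcases Int.units_eq_one_or u with h | h <;> simp [h]

lemma double_sum_eq (Q : Fin n → Matrix (Fin n) (Fin n) ℝ) :
    (∑ σ : Perm (Fin n), ((Perm.sign σ : ℤ) : ℝ) *
        ∑ τ : Perm (Fin n), ∏ b, Q (τ b) (σ b) b)
      = ∑ σ : Perm (Fin n), ∑ τ : Perm (Fin n),
          (((Perm.sign σ : ℤ) : ℝ) * ((Perm.sign τ : ℤ) : ℝ)) * ∏ i, Q i (σ i) (τ i) := by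
  simp_rw [Finset.mul_sum]
  rw [← Fintype.sum_prod_type', ← Fintype.sum_prod_type']
  have hinv : Function.Involutive
      (fun p : Perm (Fin n) × Perm (Fin n) => (p.1 * p.2⁻¹, p.2⁻¹)) := by
    intro p; simp [mul_assoc]
  refine Fintype.sum_equiv (Function.Involutive.toPerm _ hinv) _ _ (fun p => ?_)
  obtain ⟨σ, τ⟩ := p
  show ((Perm.sign σ : ℤ) : ℝ) * ∏ b, Q (τ b) (σ b) b
    = (((Perm.sign (σ * τ⁻¹) : ℤ) : ℝ) * ((Perm.sign τ⁻¹ : ℤ) : ℝ))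
        * ∏ i, Q i ((σ * τ⁻¹) i) (τ⁻¹ i)
  have hprod : (∏ i, Q i ((σ * τ⁻¹) i) (τ⁻¹ i)) = ∏ b, Q (τ b) (σ b) b := by
    rw [← Equiv.prod_comp τ (fun i => Q i ((σ * τ⁻¹) i) (τ⁻¹ i))]
    refine Finset.prod_congr rfl fun b _ => by simp [Equiv.Perm.mul_apply]
  rw [hprod]
  congr 1
  rw [_root_.map_mul, Equiv.Perm.sign_inv]
  push_cast
  rw [mul_assoc, unit_sq, mul_one]

end PartB2

end Auxiliary

/-- If `Qᵢ = Tᵢ Tᵢᵀ` are positive semidefinite and `u₁,…,uₙ` are independent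
standard Gaussian vectors in `ℝⁿ`, then
`E (det [T₁u₁, …, Tₙuₙ])² = D(Q₁,…,Qₙ)`. -/
theorem expectation_det_sq_eq_mixedDiscriminant {n : ℕ}
    (Q T : Fin n → Matrix (Fin n) (Fin n) ℝ)
    (hQ : ∀ i, (Q i).PosSemidef) (hdecomp : ∀ i, Q i = T i * (T i)ᵀ) :
    ∫ u : Fin n → (Fin n → ℝ),
        (Matrix.det (Matrix.of fun i k : Fin n => (T k).mulVec (u k) i)) ^ 2
        ∂(Measure.pi fun _ : Fin n => Measure.pi fun _ : Fin n => gaussianReal 0 1) =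
      mixedDiscriminant Q := by
  have h1 : (∫ u : Fin n → (Fin n → ℝ),
        (Matrix.det (Matrix.of fun i k : Fin n => (T k).mulVec (u k) i)) ^ 2
        ∂(Measure.pi fun _ : Fin n => Measure.pi fun _ : Fin n => gaussianReal 0 1))
      = ∑ σ : Equiv.Perm (Fin n), ∑ τ : Equiv.Perm (Fin n),
        (((Equiv.Perm.sign σ : ℤ) : ℝ) * ((Equiv.Perm.sign τ : ℤ) : ℝ)) *
          ∏ i, (T i * (T i)ᵀ) (σ i) (τ i) := partA T
  rw [h1, mixedDiscriminant_eq, double_sum_eq]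
  refine Finset.sum_congr rfl fun σ _ => Finset.sum_congr rfl fun τ _ => ?_
  simp_rw [hdecomp]
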